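/- arXiv:1706.06095 — 6 statements merged into one kernel-verified Lean document; each statement's English description precedes it below -/
import Mathlib

section
/- Let m and n be positive integers and let s_1, …, s_m be real numbers with 0 ≤ s_i ≤ 1 for all i. Then there exist indices 0 = x_0 ≤ x_1 ≤ ⋯ ≤ x_n = m such that, setting b_j = s_{x_{j-1}+1} + ⋯ + s_{x_j} (with b_j = 0 when x_{j-1} = x_j), one has |b_i − b_j| ≤ 1 for all i, j ∈ {1, …, n}. -/
/-!
Let `P` be the sequence of prefix sums: it is monotone with increments at most `1`, and the
blocks are the increments of `P` along a chain `0 = x₀ ≤ ⋯ ≤ xₙ = m`. Let `t` be the largest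
value such that some chain has all increments at least `t` (there are finitely many chains).
The greedy chain stepping each time to the first index that gains `t` stays below every such
chain, and the greedy chain stepping each time to the last index up to `m` that gains at most
`t + 1` reaches `m` after `n` steps, since otherwise all its increments would exceed `t`.
Every index lying between the two greedy chains at step `j` ends a chain of `j` increments in
`[t, t + 1]`; in particular `m` does at step `n`.
-/

open Finset

def IsPartition (m n : ℕ) (x : ℕ → ℕ) : Prop :=
  x 0 = 0 ∧ x n = m ∧ ∀ j < n, x j ≤ x (j + 1)

def IncrementsIn (P : ℕ → ℝ) (n : ℕ) (x : ℕ → ℕ) (I : Set ℝ) : Prop :=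
  ∀ j < n, P (x (j + 1)) - P (x j) ∈ I

theorem IsPartition.mono {m n : ℕ} {x : ℕ → ℕ} (hx : IsPartition m n x) {i j : ℕ}
    (hij : i ≤ j) (hjn : j ≤ n) : x i ≤ x j := by
  induction j, hij using Nat.le_induction with
  | base => rfl
  | succ j _ ih => exact (ih (by omega)).trans (hx.2.2 j (by omega))

theorem IsPartition.le {m n : ℕ} {x : ℕ → ℕ} (hx : IsPartition m n x) {j : ℕ} (hj : j ≤ n) :
    x j ≤ m :=
  hx.2.1 ▸ hx.mono hj le_rfl

theorem IsPartition.snoc {m n : ℕ} {x : ℕ → ℕ} (hx : IsPartition m n x) {i : ℕ} (hmi : m ≤ i) :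
    IsPartition i (n + 1) (fun j => if j ≤ n then x j else i) := by
  refine ⟨by simp [hx.1], by simp, fun j hj => ?_⟩
  by_cases hjn : j + 1 ≤ n
  · simp [hjn, show j ≤ n by omega, hx.2.2 j hjn]
  · simp [show j = n by omega, hx.2.1, hmi]

theorem IncrementsIn.snoc {P : ℕ → ℝ} {n : ℕ} {x : ℕ → ℕ} {I : Set ℝ} (hx : IncrementsIn P n x I)
    {i : ℕ} (hi : P i - P (x n) ∈ I) :
    IncrementsIn P (n + 1) (fun j => if j ≤ n then x j else i) I := by
  intro j hj
  by_cases hjn : j + 1 ≤ n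
  · simpa [hjn, show j ≤ n by omega] using hx j hjn
  · simpa [hjn, show j = n by omega] using hi

section Chains

variable {P : ℕ → ℝ} {t : ℝ} {m n : ℕ} {x : ℕ → ℕ}

noncomputable def firstAtLeast (P : ℕ → ℝ) (a : ℕ) (w : ℝ) : ℕ :=
  sInf {i | a ≤ i ∧ w ≤ P i}

theorem firstAtLeast_spec {a b : ℕ} {w : ℝ} (hab : a ≤ b) (hb : w ≤ P b) :
    a ≤ firstAtLeast P a w ∧ firstAtLeast P a w ≤ b ∧ w ≤ P (firstAtLeast P a w) :=
  have hmem := Nat.sInf_mem (s := {i | a ≤ i ∧ w ≤ P i}) ⟨b, hab, hb⟩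
  ⟨hmem.1, Nat.sInf_le ⟨hab, hb⟩, hmem.2⟩

theorem firstAtLeast_le_max (hP1 : ∀ k, P (k + 1) ≤ P k + 1) {a b : ℕ} {w : ℝ} (hab : a ≤ b)
    (hb : w ≤ P b) : P (firstAtLeast P a w) ≤ max (P a) (w + 1) := by
  obtain ⟨haf, -, -⟩ := firstAtLeast_spec hab hb
  rcases haf.eq_or_lt with h | h
  · exact h ▸ le_max_left _ _
  · obtain ⟨k, hk⟩ := Nat.exists_eq_add_one_of_ne_zero (show firstAtLeast P a w ≠ 0 by omega)
    have hprev : ¬ (a ≤ k ∧ w ≤ P k) :=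
      Nat.notMem_of_lt_sInf (s := {i | a ≤ i ∧ w ≤ P i}) (by unfold firstAtLeast at hk; omega)
    rw [hk]
    exact le_max_of_le_right (by linarith [hP1 k, not_le.1 fun h' => hprev ⟨by omega, h'⟩])

/-- The predecessor of `i` at step `j + 1` is the first index from `lo j` on at which `P` gets
within `t + 1` of `P i`. -/
theorem exists_partition_of_mem_Icc (hP : Monotone P) (hP1 : ∀ k, P (k + 1) ≤ P k + 1)
    (ht : 0 ≤ t) {lo hi : ℕ → ℕ} (hhi₀ : hi 0 = 0)
    (hlo : ∀ j < n, lo j ≤ lo (j + 1) ∧ P (lo j) + t ≤ P (lo (j + 1)))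
    (hhi : ∀ j < n, P (hi (j + 1)) ≤ P (hi j) + t + 1) (hlohi : ∀ j < n, lo j ≤ hi j) :
    ∀ j ≤ n, ∀ i ∈ Set.Icc (lo j) (hi j),
      ∃ x, IsPartition i j x ∧ IncrementsIn P j x (Set.Icc t (t + 1)) := by
  intro j
  induction j with
  | zero =>
    rintro - i ⟨-, hi0⟩
    obtain rfl : i = 0 := by omega
    exact ⟨fun _ => 0, ⟨rfl, rfl, fun _ _ => le_rfl⟩, fun _ h => absurd h (Nat.not_lt_zero _)⟩
  | succ j ih =>
    rintro hj i ⟨hloi, hihi⟩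
    obtain ⟨hlo_le, hlo_gain⟩ := hlo j hj
    have hab : lo j ≤ min (hi j) i := le_min (hlohi j hj) (hlo_le.trans hloi)
    have hb : P i - t - 1 ≤ P (min (hi j) i) := by
      rcases min_choice (hi j) i with h | h <;> rw [h]
      · linarith [hP hihi, hhi j hj]
      · linarith
    obtain ⟨hk₁, hk₂, hk₃⟩ := firstAtLeast_spec hab hb
    have hk₄ := firstAtLeast_le_max hP1 hab hb
    rw [max_eq_right (by linarith [hP hloi])] at hk₄
    obtain ⟨x, hx, hxI⟩ := ih (by omega) _ ⟨hk₁, hk₂.trans (min_le_left _ _)⟩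
    refine ⟨_, hx.snoc (hk₂.trans (min_le_right _ _)), hxI.snoc ?_⟩
    rw [hx.2.1]
    constructor <;> linarith

noncomputable def greedyLow (P : ℕ → ℝ) (t : ℝ) : ℕ → ℕ
  | 0 => 0
  | j + 1 => firstAtLeast P (greedyLow P t j) (P (greedyLow P t j) + t)

open Classical in
noncomputable def greedyHigh (P : ℕ → ℝ) (t : ℝ) (m : ℕ) : ℕ → ℕ
  | 0 => 0
  | j + 1 => Nat.findGreatest (fun i => P i ≤ P (greedyHigh P t m j) + t + 1) m

theorem greedyLow_le (hP : Monotone P) (hx : IsPartition m n x)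
    (hxI : IncrementsIn P n x (Set.Ici t)) : ∀ j ≤ n, greedyLow P t j ≤ x j := by
  intro j
  induction j with
  | zero => simp [greedyLow]
  | succ j ih =>
    intro hj
    have hlo := ih (by omega)
    exact (firstAtLeast_spec (hlo.trans (hx.2.2 j hj))
      (by linarith [hP hlo, Set.mem_Ici.1 (hxI j hj)])).2.1

theorem greedyLow_step (hP : Monotone P) (hP1 : ∀ k, P (k + 1) ≤ P k + 1) (ht : 0 ≤ t)
    (hx : IsPartition m n x) (hxI : IncrementsIn P n x (Set.Ici t)) {j : ℕ} (hj : j < n) :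
    greedyLow P t j ≤ greedyLow P t (j + 1) ∧
      P (greedyLow P t j) + t ≤ P (greedyLow P t (j + 1)) ∧
      P (greedyLow P t (j + 1)) ≤ P (greedyLow P t j) + t + 1 := by
  have hlo := greedyLow_le hP hx hxI j hj.le
  have hab : greedyLow P t j ≤ x (j + 1) := hlo.trans (hx.2.2 j hj)
  have hb : P (greedyLow P t j) + t ≤ P (x (j + 1)) := by
    linarith [hP hlo, Set.mem_Ici.1 (hxI j hj)]
  obtain ⟨h₁, -, h₂⟩ := firstAtLeast_spec hab hb
  have h₃ := firstAtLeast_le_max hP1 hab hb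
  rw [max_eq_right (by linarith)] at h₃
  exact ⟨h₁, h₂, h₃⟩

theorem greedyHigh_le (j : ℕ) : greedyHigh P t m j ≤ m := by
  cases j with
  | zero => exact Nat.zero_le m
  | succ j => exact Nat.findGreatest_le m

theorem greedyHigh_step (hP1 : ∀ k, P (k + 1) ≤ P k + 1) (ht : 0 ≤ t) (j : ℕ) :
    greedyHigh P t m j ≤ greedyHigh P t m (j + 1) ∧
      P (greedyHigh P t m (j + 1)) ≤ P (greedyHigh P t m j) + t + 1 ∧
      (greedyHigh P t m (j + 1) < m →
        P (greedyHigh P t m j) + t < P (greedyHigh P t m (j + 1))) := by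
  have hself : P (greedyHigh P t m j) ≤ P (greedyHigh P t m j) + t + 1 := by linarith
  refine ⟨Nat.le_findGreatest (greedyHigh_le j) hself,
    Nat.findGreatest_spec (P := fun i => P i ≤ P (greedyHigh P t m j) + t + 1)
      (greedyHigh_le j) hself, fun hlt => ?_⟩
  have hnext : ¬ P (greedyHigh P t m (j + 1) + 1) ≤ P (greedyHigh P t m j) + t + 1 :=
    Nat.findGreatest_is_greatest (Nat.lt_succ_self _) hlt
  linarith [hP1 (greedyHigh P t m (j + 1)), not_le.1 hnext]

theorem greedyLow_le_greedyHigh (hP : Monotone P) (hP1 : ∀ k, P (k + 1) ≤ P k + 1) (ht : 0 ≤ t)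
    (hx : IsPartition m n x) (hxI : IncrementsIn P n x (Set.Ici t)) :
    ∀ j ≤ n, greedyLow P t j ≤ greedyHigh P t m j := by
  intro j
  induction j with
  | zero => exact fun _ => le_rfl
  | succ j ih =>
    intro hj
    have hstep := greedyLow_step hP hP1 ht hx hxI hj
    have hPle := hP (ih (by omega))
    exact Nat.le_findGreatest ((greedyLow_le hP hx hxI _ hj).trans (hx.le hj)) (by linarith)

/-- If the greedy chain of increments at most `t + 1` stopped short of `m`, all of its
increments would exceed `t`, and completing it by `m` would beat the threshold `t`. -/
theorem greedyHigh_eq (hP : Monotone P) (hP1 : ∀ k, P (k + 1) ≤ P k + 1) (ht : 0 ≤ t)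
    (hn : 0 < n) (hmax : ¬ ∃ x, IsPartition m n x ∧ IncrementsIn P n x (Set.Ioi t)) :
    greedyHigh P t m n = m := by
  by_contra hne
  have hlt : greedyHigh P t m n < m := (greedyHigh_le n).lt_of_ne hne
  have hmono : Monotone (greedyHigh P t m) :=
    monotone_nat_of_le_succ fun j => (greedyHigh_step hP1 ht j).1
  refine hmax ⟨fun j => if j < n then greedyHigh P t m j else m,
    ⟨by simp [hn, greedyHigh], by simp, fun j hj => ?_⟩, fun j hj => ?_⟩
  · simp only [hj, if_true]
    split_ifs
    exacts [(greedyHigh_step hP1 ht j).1, greedyHigh_le j]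
  · have hgain :=
      (greedyHigh_step hP1 ht j).2.2 ((hmono (show j + 1 ≤ n by omega)).trans_lt hlt)
    simp only [Set.mem_Ioi, hj, if_true]
    split_ifs
    · linarith
    · linarith [hP (greedyHigh_le (P := P) (t := t) (m := m) (j + 1))]

theorem exists_max_threshold (hP : Monotone P) (hn : 0 < n) (m : ℕ) :
    ∃ t, 0 ≤ t ∧ (∃ x, IsPartition m n x ∧ IncrementsIn P n x (Set.Ici t)) ∧
      ¬ ∃ x, IsPartition m n x ∧ IncrementsIn P n x (Set.Ioi t) := by
  classical
  -- the least increment of a chain is one of the finitely many values `P b - P a`, `a, b ≤ m`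
  let feasible : Finset ℝ :=
    ((range (m + 1) ×ˢ range (m + 1)).image fun p => P p.2 - P p.1).filter
      fun v => ∃ x, IsPartition m n x ∧ IncrementsIn P n x (Set.Ici v)
  have hzero : (0 : ℝ) ∈ feasible := by
    refine mem_filter.2 ⟨mem_image.2 ⟨(0, 0), by simp, by simp⟩,
      fun j => if j < n then 0 else m, ⟨by simp [hn], by simp, fun j hj => ?_⟩, fun j hj => ?_⟩
    · dsimp only
      split_ifs <;> simp
    · have hle : (if j < n then 0 else m) ≤ if j + 1 < n then 0 else m := by split_ifs <;> simp
      simpa using hP hle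
  refine ⟨feasible.max' ⟨0, hzero⟩, le_max' _ _ hzero, (mem_filter.1 (max'_mem feasible _)).2, ?_⟩
  rintro ⟨x, hx, hxI⟩
  obtain ⟨j₀, hj₀, hmin⟩ := exists_min_image (range n) (fun j => P (x (j + 1)) - P (x j))
    ⟨0, mem_range.2 hn⟩
  rw [mem_range] at hj₀
  have hmem : P (x (j₀ + 1)) - P (x j₀) ∈ feasible := by
    refine mem_filter.2 ⟨mem_image.2 ⟨(x j₀, x (j₀ + 1)), ?_, rfl⟩, x, hx, fun j hj => ?_⟩
    · simp only [mem_product, mem_range, Nat.lt_succ_iff]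
      exact ⟨hx.le hj₀.le, hx.le hj₀⟩
    · exact hmin j (mem_range.2 hj)
  exact (hxI j₀ hj₀).not_ge (le_max' _ _ hmem)

theorem exists_partition_increments_Icc (hP : Monotone P) (hP1 : ∀ k, P (k + 1) ≤ P k + 1)
    (hn : 0 < n) (m : ℕ) :
    ∃ t x, IsPartition m n x ∧ IncrementsIn P n x (Set.Icc t (t + 1)) := by
  obtain ⟨t, ht, ⟨x, hx, hxI⟩, hmax⟩ := exists_max_threshold hP hn m
  have hlo_le := greedyLow_le hP hx hxI n le_rfl
  have hhi := greedyHigh_eq hP hP1 ht hn hmax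
  refine ⟨t, exists_partition_of_mem_Icc hP hP1 ht rfl
    (fun j hj => (greedyLow_step hP hP1 ht hx hxI hj).imp_right And.left)
    (fun j _ => (greedyHigh_step hP1 ht j).2.1)
    (fun j hj => greedyLow_le_greedyHigh hP hP1 ht hx hxI j hj.le) n le_rfl m ⟨?_, hhi.ge⟩⟩
  exact hx.2.1 ▸ hlo_le

end Chains

section PrefixSums

variable {s : ℕ → ℝ} {m : ℕ}

theorem monotone_sum_range_min (hs : ∀ i < m, 0 ≤ s i) :
    Monotone fun i => ∑ k ∈ range (min i m), s k := fun i j hij =>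
  sum_le_sum_of_subset_of_nonneg (range_subset_range.2 (by omega)) fun k hk _ =>
    hs k (by rw [mem_range] at hk; omega)

theorem sum_range_min_succ_le (hs : ∀ i < m, s i ≤ 1) (i : ℕ) :
    ∑ k ∈ range (min (i + 1) m), s k ≤ ∑ k ∈ range (min i m), s k + 1 := by
  by_cases h : i < m
  · rw [min_eq_left (by omega : i + 1 ≤ m), min_eq_left h.le, sum_range_succ]
    linarith [hs i h]
  · rw [min_eq_right (by omega : m ≤ i + 1), min_eq_right (by omega : m ≤ i)]
    linarith

theorem sum_Ico_eq_sub_sum_range_min {a b : ℕ} (hab : a ≤ b) (hb : b ≤ m) :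
    ∑ k ∈ Ico a b, s k = ∑ k ∈ range (min b m), s k - ∑ k ∈ range (min a m), s k := by
  rw [min_eq_left hb, min_eq_left (hab.trans hb), sum_Ico_eq_sub _ hab]

end PrefixSums

theorem block_partition_general (m n : ℕ) (hn : 0 < n) (s : ℕ → ℝ)
    (hs : ∀ i, i < m → 0 ≤ s i ∧ s i ≤ 1) :
    ∃ x : ℕ → ℕ, x 0 = 0 ∧ x n = m ∧ (∀ j, j < n → x j ≤ x (j + 1)) ∧
      ∀ i j, 1 ≤ i → i ≤ n → 1 ≤ j → j ≤ n →
        |(∑ k ∈ Finset.Ico (x (i - 1)) (x i), s k) -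
          (∑ k ∈ Finset.Ico (x (j - 1)) (x j), s k)| ≤ 1 := by
  obtain ⟨t, x, hx, hxI⟩ := exists_partition_increments_Icc
    (monotone_sum_range_min fun i hi => (hs i hi).1)
    (sum_range_min_succ_le fun i hi => (hs i hi).2) hn m
  have hblock : ∀ j, 1 ≤ j → j ≤ n → ∑ k ∈ Ico (x (j - 1)) (x j), s k ∈ Set.Icc t (t + 1) := by
    intro j hj₁ hjn
    obtain ⟨j, rfl⟩ : ∃ i, j = i + 1 := ⟨j - 1, by omega⟩
    rw [Nat.add_sub_cancel, sum_Ico_eq_sub_sum_range_min (hx.2.2 j hjn) (hx.le hjn)]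
    exact hxI j hjn
  refine ⟨x, hx.1, hx.2.1, hx.2.2, fun i j hi₁ hin hj₁ hjn => abs_le.2 ?_⟩
  obtain ⟨hi_lo, hi_hi⟩ := hblock i hi₁ hin
  obtain ⟨hj_lo, hj_hi⟩ := hblock j hj₁ hjn
  constructor <;> linarith

/-- **Block partition theorem** (Bárány–Grinberg style, Theorem 1 of the paper).
Given reals `s 0, …, s (m-1)` in `[0,1]` and a positive integer `n`, there are
indices `0 = x 0 ≤ x 1 ≤ ⋯ ≤ x n = m` such that the block sums
`b j = ∑_{k ∈ [x (j-1), x j)} s k` satisfy `|b i − b j| ≤ 1` for all `i, j ∈ {1,…,n}`. -/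
theorem block_partition (m n : ℕ) (hm : 0 < m) (hn : 0 < n) (s : ℕ → ℝ)
    (hs : ∀ i, i < m → 0 ≤ s i ∧ s i ≤ 1) :
    ∃ x : ℕ → ℕ, x 0 = 0 ∧ x n = m ∧ (∀ j, j < n → x j ≤ x (j + 1)) ∧
      ∀ i j, 1 ≤ i → i ≤ n → 1 ≤ j → j ≤ n →
        |(∑ k ∈ Finset.Ico (x (i - 1)) (x i), s k) -
          (∑ k ∈ Finset.Ico (x (j - 1)) (x j), s k)| ≤ 1 :=
  block_partition_general m n hn s hs
end

section
/- Let n ≥ 1 and let A_0, A_1, …, A_n ⊆ ℝ be closed sets such that A_0 = {0}, A_n = {s} for some s ∈ ℝ, and A_j ∩ [a, a+1] ≠ ∅ for every j ∈ {1, …, n−1} and every a ∈ ℝ. Then there exists a transversal a_0 ∈ A_0, a_1 ∈ A_1, …, a_n ∈ A_n such that, with z_j = a_j − a_{j-1}, one has |z_i − z_j| ≤ 1 for all i, j ∈ {1, …, n}. -/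
/-!
For a step size `c`, let `R(c)` be the set of values `a (n-1)` over partial transversals whose
steps all lie in `[c, c + 1]`; it suffices to find `c` and `u ∈ R(c)` with `s - u ∈ [c, c + 1]`.
Because every `A j` meets every interval of length one, `R(c)` is `1`-dense between any two of
its points, so it is enough that `s - c` lies between two points of `R(c)`. The sets of `c` for
which some point of `R(c)` lies below, resp. above, `s - c` cover `ℝ`, are nonempty, and are
closed (the `A j` are closed and `R(c) ⊆ [(n-1) c, (n-1) (c + 1)]`), so by connectedness of `ℝ`
they meet.
-/

open Set

theorem isClosed_image_fst_of_mem_Icc {X : Type*} [TopologicalSpace X] {S : Set (X × ℝ)}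
    (hS : IsClosed S) {f : X → ℝ} (hf : Continuous f) {w : ℝ}
    (hw : ∀ q ∈ S, q.2 ∈ Icc (f q.1) (f q.1 + w)) : IsClosed (Prod.fst '' S) := by
  let T : Set (X × Icc (0 : ℝ) w) := {q | (q.1, f q.1 + q.2) ∈ S}
  have hT : IsClosed T := hS.preimage (by fun_prop)
  have hST : Prod.fst '' S = Prod.fst '' T := by
    ext p
    constructor
    · rintro ⟨⟨p, x⟩, hx, rfl⟩
      have hb := hw _ hx
      exact ⟨(p, ⟨x - f p, ⟨by linarith [hb.1], by linarith [hb.2]⟩⟩),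
        by simpa [T] using hx, rfl⟩
    · rintro ⟨⟨p, t⟩, ht, rfl⟩
      exact ⟨_, ht, rfl⟩
  rw [hST]
  exact isClosedMap_fst_of_compactSpace T hT

/-- `reachable A c k` is the set of values `a k` over all partial transversals
`a 0 = 0, a 1 ∈ A 1, …, a k ∈ A k` all of whose steps `a j - a (j - 1)` lie in `[c, c + 1]`. -/
def reachable (A : ℕ → Set ℝ) (c : ℝ) : ℕ → Set ℝ
  | 0 => {0}
  | k + 1 => {y ∈ A (k + 1) | ∃ x ∈ reachable A c k, y - x ∈ Icc c (c + 1)}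

section reachable

variable {A : ℕ → Set ℝ} {c : ℝ} {k : ℕ}

theorem reachable_nonempty
    (hdense : ∀ j, 1 ≤ j → j ≤ k → ∀ a : ℝ, (A j ∩ Icc a (a + 1)).Nonempty) :
    (reachable A c k).Nonempty := by
  induction k with
  | zero => exact singleton_nonempty 0
  | succ k ih =>
    obtain ⟨x, hx⟩ := ih fun j hj hjk => hdense j hj (by omega)
    obtain ⟨y, hyA, hy⟩ := hdense (k + 1) (by omega) le_rfl (x + c)
    exact ⟨y, hyA, x, hx, ⟨by linarith [hy.1], by linarith [hy.2]⟩⟩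

theorem mem_Icc_of_mem_reachable {x : ℝ} (hx : x ∈ reachable A c k) :
    x ∈ Icc (k * c) (k * c + k) := by
  induction k generalizing x with
  | zero => simp_all [reachable]
  | succ k ih =>
    obtain ⟨-, y, hy, hxy⟩ := hx
    have := ih hy
    simp only [mem_Icc] at this hxy ⊢
    push_cast
    constructor <;> linarith

theorem exists_mem_reachable_Icc
    (hdense : ∀ j, 1 ≤ j → j ≤ k → ∀ a : ℝ, (A j ∩ Icc a (a + 1)).Nonempty)
    {v w t : ℝ} (hv : v ∈ reachable A c k) (hw : w ∈ reachable A c k) (hvt : v ≤ t)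
    (htw : t ≤ w) : ∃ u ∈ reachable A c k, u ∈ Icc (t - 1) t := by
  induction k generalizing v w t with
  | zero =>
    obtain rfl : v = 0 := hv
    obtain rfl : w = 0 := hw
    exact ⟨0, rfl, ⟨by linarith, by linarith⟩⟩
  | succ k ih =>
    by_cases hv1 : t - 1 ≤ v
    · exact ⟨v, hv, hv1, hvt⟩
    by_cases hw1 : w ≤ t
    · exact ⟨w, hw, by linarith, hw1⟩
    rw [not_le] at hv1 hw1
    obtain ⟨-, v', hv', hvv'⟩ := hv
    obtain ⟨-, w', hw', hww'⟩ := hw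
    simp only [mem_Icc] at hvv' hww'
    obtain ⟨b, hbA, hb⟩ := hdense (k + 1) (by omega) le_rfl (t - 1)
    simp only [mem_Icc, sub_add_cancel] at hb
    -- `b` either is one admissible step above `w'`, or `b - c` lies between `v'` and `w'`.
    by_cases hbw : w' + c < b
    · exact ⟨b, ⟨hbA, w', hw', ⟨by linarith, by linarith⟩⟩, hb⟩
    obtain ⟨u, hu, hu'⟩ := ih (fun j hj hjk => hdense j hj (by omega)) hv' hw'
      (t := b - c) (by linarith) (by linarith)
    simp only [mem_Icc] at hu'
    exact ⟨b, ⟨hbA, u, hu, ⟨by linarith, by linarith⟩⟩, hb⟩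

theorem isClosed_setOf_mem_reachable (hclosed : ∀ j, 1 ≤ j → j ≤ k → IsClosed (A j)) :
    IsClosed {p : ℝ × ℝ | p.2 ∈ reachable A p.1 k} := by
  induction k with
  | zero => exact isClosed_eq continuous_snd continuous_const
  | succ k ih =>
    have hS : IsClosed ((fun q : (ℝ × ℝ) × ℝ => (q.1.1, q.2)) ⁻¹' {p | p.2 ∈ reachable A p.1 k} ∩
        {q | q.1.1 ≤ q.1.2 - q.2} ∩ {q | q.1.2 - q.2 ≤ q.1.1 + 1}) :=
      (((ih fun j hj hjk => hclosed j hj (by omega)).preimage (by fun_prop)).inter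
        (isClosed_le (by fun_prop) (by fun_prop))).inter (isClosed_le (by fun_prop) (by fun_prop))
    have hproj := isClosed_image_fst_of_mem_Icc hS (f := fun p => p.2 - p.1 - 1) (w := 1)
      (by fun_prop) fun q hq => by
        obtain ⟨⟨-, h₁⟩, h₂⟩ := hq
        simp only [mem_ofPred_eq, mem_Icc] at h₁ h₂ ⊢
        constructor <;> linarith
    convert ((hclosed (k + 1) (by omega) le_rfl).preimage continuous_snd).inter hproj using 1
    ext ⟨c, y⟩
    simp [reachable, and_assoc]

theorem exists_transversal_of_mem_reachable {y : ℝ} (hy : y ∈ reachable A c k) :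
    ∃ a : ℕ → ℝ, a 0 = 0 ∧ a k = y ∧
      ∀ j, 1 ≤ j → j ≤ k → a j ∈ A j ∧ a j - a (j - 1) ∈ Icc c (c + 1) := by
  induction k generalizing y with
  | zero => exact ⟨fun _ => 0, rfl, hy.symm, fun j hj hjk => by omega⟩
  | succ k ih =>
    obtain ⟨hyA, x, hx, hxy⟩ := hy
    obtain ⟨a, ha0, hak, ha⟩ := ih hx
    refine ⟨Function.update a (k + 1) y, by simp [ha0], by simp, fun j hj hjk => ?_⟩
    rcases hjk.lt_or_eq with hjk | rfl
    · simp only [Function.update_of_ne (show j ≠ k + 1 by omega),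
        Function.update_of_ne (show j - 1 ≠ k + 1 by omega)]
      exact ha j hj (by omega)
    · rw [Function.update_self, Nat.add_sub_cancel,
        Function.update_of_ne (show k ≠ k + 1 by omega), hak]
      exact ⟨hyA, hxy⟩

theorem exists_mem_reachable_le_and_ge (hclosed : ∀ j, 1 ≤ j → j ≤ k → IsClosed (A j))
    (hdense : ∀ j, 1 ≤ j → j ≤ k → ∀ a : ℝ, (A j ∩ Icc a (a + 1)).Nonempty) (s : ℝ) :
    ∃ c, ∃ v ∈ reachable A c k, ∃ w ∈ reachable A c k, v + c ≤ s ∧ s ≤ w + c := by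
  let L := Prod.fst '' {p : ℝ × ℝ | p.2 ∈ reachable A p.1 k ∧ p.2 + p.1 ≤ s}
  let U := Prod.fst '' {p : ℝ × ℝ | p.2 ∈ reachable A p.1 k ∧ s ≤ p.2 + p.1}
  have hsum : Continuous fun p : ℝ × ℝ => p.2 + p.1 := by fun_prop
  have hL : IsClosed L := isClosed_image_fst_of_mem_Icc
    ((isClosed_setOf_mem_reachable hclosed).inter (isClosed_le hsum continuous_const))
    (f := fun c : ℝ => k * c) (by fun_prop) fun q hq => mem_Icc_of_mem_reachable hq.1
  have hU : IsClosed U := isClosed_image_fst_of_mem_Icc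
    ((isClosed_setOf_mem_reachable hclosed).inter (isClosed_le continuous_const hsum))
    (f := fun c : ℝ => k * c) (by fun_prop) fun q hq => mem_Icc_of_mem_reachable hq.1
  have hcover : univ ⊆ L ∪ U := by
    intro c _
    obtain ⟨x, hx⟩ := reachable_nonempty (c := c) hdense
    rcases le_total (x + c) s with h | h
    · exact Or.inl ⟨(c, x), ⟨hx, h⟩, rfl⟩
    · exact Or.inr ⟨(c, x), ⟨hx, h⟩, rfl⟩
  have hLne : (univ ∩ L).Nonempty := by
    obtain ⟨x, hx⟩ := reachable_nonempty (c := (s - k) / (k + 1)) hdense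
    refine ⟨_, trivial, (_, x), ⟨hx, ?_⟩, rfl⟩
    have := (mem_Icc_of_mem_reachable hx).2
    field_simp at this ⊢
    linarith
  have hUne : (univ ∩ U).Nonempty := by
    obtain ⟨x, hx⟩ := reachable_nonempty (c := s / (k + 1)) hdense
    refine ⟨_, trivial, (_, x), ⟨hx, ?_⟩, rfl⟩
    have := (mem_Icc_of_mem_reachable hx).1
    field_simp at this ⊢
    linarith
  obtain ⟨_, -, ⟨⟨c, v⟩, ⟨hv, hvs⟩, rfl⟩, ⟨⟨_, w⟩, ⟨hw, hws⟩, rfl⟩⟩ :=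
    isPreconnected_closed_iff.mp isPreconnected_univ L U hL hU hcover hLne hUne
  exact ⟨_, v, hv, w, hw, hvs, hws⟩

theorem exists_mem_reachable_succ (hclosed : ∀ j, 1 ≤ j → j ≤ k → IsClosed (A j))
    (hdense : ∀ j, 1 ≤ j → j ≤ k → ∀ a : ℝ, (A j ∩ Icc a (a + 1)).Nonempty) {s : ℝ}
    (hs : s ∈ A (k + 1)) : ∃ c, s ∈ reachable A c (k + 1) := by
  obtain ⟨c, v, hv, w, hw, hvs, hsw⟩ := exists_mem_reachable_le_and_ge hclosed hdense s
  obtain ⟨u, hu, hu'⟩ :=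
    exists_mem_reachable_Icc hdense hv hw (t := s - c) (by linarith) (by linarith)
  simp only [mem_Icc] at hu'
  exact ⟨c, hs, u, hu, ⟨by linarith, by linarith⟩⟩

end reachable

/-- **Transversal theorem** (Theorem 2 of the paper). Given closed sets
`A 0, …, A n ⊆ ℝ` with `A 0 = {0}`, `A n = {s}`, and `A j ∩ [a, a+1] ≠ ∅` for every
`j ∈ {1,…,n−1}` and every `a ∈ ℝ`, there is a transversal `a j ∈ A j` such that the
differences `z j = a j − a (j−1)` satisfy `|z i − z j| ≤ 1` for all `i, j ∈ {1,…,n}`. -/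
theorem transversal_theorem (n : ℕ) (hn : 1 ≤ n) (A : ℕ → Set ℝ) (s : ℝ)
    (hclosed : ∀ j, j ≤ n → IsClosed (A j))
    (hA0 : A 0 = {0}) (hAn : A n = {s})
    (hdense : ∀ j, 1 ≤ j → j < n → ∀ a : ℝ, (A j ∩ Set.Icc a (a + 1)).Nonempty) :
    ∃ a : ℕ → ℝ, (∀ j, j ≤ n → a j ∈ A j) ∧
      ∀ i j, 1 ≤ i → i ≤ n → 1 ≤ j → j ≤ n →
        |(a i - a (i - 1)) - (a j - a (j - 1))| ≤ 1 := by
  obtain ⟨m, rfl⟩ : ∃ m, n = m + 1 := ⟨n - 1, by omega⟩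
  obtain ⟨c, hc⟩ := exists_mem_reachable_succ (fun j _ hj => hclosed j (by omega))
    (fun j hj hjm => hdense j hj (by omega)) (hAn ▸ mem_singleton s)
  obtain ⟨a, ha0, -, ha⟩ := exists_transversal_of_mem_reachable hc
  refine ⟨a, fun j hj => ?_, fun i j hi hin hj hjn => ?_⟩
  · rcases Nat.eq_zero_or_pos j with rfl | hj0
    · rw [hA0, ha0]
      rfl
    · exact (ha j hj0 hj).1
  · have hzi := (ha i hi hin).2
    have hzj := (ha j hj hjn).2
    simp only [mem_Icc] at hzi hzj
    rw [abs_le]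
    constructor <;> linarith
end

section
/- Let n ≥ 1, let s be an integer not divisible by n, and set A_0 = {0}, A_i = ℤ for i ∈ {1, …, n−1}, A_n = {s}. Then for every transversal a_0 ∈ A_0, …, a_n ∈ A_n, setting z_j = a_j − a_{j-1}, there exist i, j ∈ {1, …, n} with |z_i − z_j| ≥ 1. Hence the bound 1 in the transversal theorem is best possible. -/
/-!
If all gaps `z i = a i - a (i - 1)` of an integer transversal were within distance `< 1` of
each other, they would all be equal integers, since distinct integers are at distance `≥ 1`.
Telescoping then gives `s = a n - a 0 = n * z n`, so `n ∣ s`.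
-/

namespace Int

theorem dvd_sub_of_forall_sub_eq {b : ℕ → ℤ} {n : ℕ} {d : ℤ}
    (h : ∀ i < n, b (i + 1) - b i = d) : (n : ℤ) ∣ b n - b 0 :=
  ⟨d, by
    rw [← Finset.sum_range_sub, Finset.sum_congr rfl fun i hi => h i (Finset.mem_range.mp hi),
      Finset.sum_const, Finset.card_range, nsmul_eq_mul]⟩

theorem dvd_sub_of_abs_sub_sub_lt_one {b : ℕ → ℤ} {n : ℕ}
    (h : ∀ i j, 1 ≤ i → i ≤ n → 1 ≤ j → j ≤ n → |(b i - b (i - 1)) - (b j - b (j - 1))| < 1) :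
    (n : ℤ) ∣ b n - b 0 := by
  refine dvd_sub_of_forall_sub_eq (d := b n - b (n - 1)) fun i hi => ?_
  have hgap := h (i + 1) n (by omega) hi (by omega) le_rfl
  rw [Nat.add_sub_cancel] at hgap
  exact sub_eq_zero.mp (abs_lt_one_iff.mp hgap)

end Int

theorem transversal_theorem_sharp_general (n : ℕ) (s : ℤ) (hdvd : ¬ (n : ℤ) ∣ s)
    (a : ℕ → ℝ) (ha0 : a 0 = 0) (han : a n = (s : ℝ))
    (haZ : ∀ i, 1 ≤ i → i < n → ∃ k : ℤ, a i = (k : ℝ)) :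
    ∃ i j, 1 ≤ i ∧ i ≤ n ∧ 1 ≤ j ∧ j ≤ n ∧
      1 ≤ |(a i - a (i - 1)) - (a j - a (j - 1))| := by
  by_contra! hclose
  have hint : ∀ i ≤ n, ∃ k : ℤ, a i = k := by
    intro i hi
    rcases Nat.eq_zero_or_pos i with rfl | hpos
    · exact ⟨0, by simp [ha0]⟩
    rcases hi.lt_or_eq with hlt | rfl
    · exact haZ i hpos hlt
    · exact ⟨s, han⟩
  choose! b hb using hint
  have hdvd_b : (n : ℤ) ∣ b n - b 0 := by
    refine Int.dvd_sub_of_abs_sub_sub_lt_one fun i j hi hin hj hjn => ?_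
    have := hclose i j hi hin hj hjn
    rw [hb i hin, hb (i - 1) (by omega), hb j hjn, hb (j - 1) (by omega)] at this
    exact_mod_cast this
  have hb0 : b 0 = 0 := by exact_mod_cast (hb 0 (Nat.zero_le n)).symm.trans ha0
  have hbn : b n = s := by exact_mod_cast (hb n le_rfl).symm.trans han
  exact hdvd (by simpa [hb0, hbn] using hdvd_b)

/-- Sharpness of the transversal theorem: with `A 0 = {0}`, `A i = ℤ` for
`i ∈ {1,…,n−1}` and `A n = {s}` for an integer `s` not divisible by `n`, every
transversal `a j ∈ A j` has two differences `z i = a i − a (i−1)`,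
`z j = a j − a (j−1)` with `|z i − z j| ≥ 1`. -/
theorem transversal_theorem_sharp (n : ℕ) (hn : 1 ≤ n) (s : ℤ) (hdvd : ¬ (n : ℤ) ∣ s)
    (a : ℕ → ℝ) (ha0 : a 0 = 0) (han : a n = (s : ℝ))
    (haZ : ∀ i, 1 ≤ i → i < n → ∃ k : ℤ, a i = (k : ℝ)) :
    ∃ i j, 1 ≤ i ∧ i ≤ n ∧ 1 ≤ j ∧ j ≤ n ∧
      1 ≤ |(a i - a (i - 1)) - (a j - a (j - 1))| :=
  transversal_theorem_sharp_general n s hdvd a ha0 han haZ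
end

section
/- Let A_0, A_1, …, A_n be a grid-like sequence in ℝ^d (with the Euclidean norm), with A_0 = {0} and A_n = {s}. Define B_0 = {0} ⊆ ℝ^{d+1}, B_i = A_i × ℝ for i ∈ {1, …, n−1}, and B_n = {(s, 0)} ⊆ ℝ^{d+1}. Then B_0, B_1, …, B_n is a grid-like sequence in ℝ^{d+1} (with the Euclidean norm), and for every transversal (b_0, …, b_n) of (B_i), the projections a_i = π(b_i) ∈ ℝ^d onto the first d coordinates form a transversal of (A_i) satisfying D((a_i)) ≤ D((b_i)). -/
/-!
Projection onto the first `d` coordinates is linear and `1`-Lipschitz, so it maps transversals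
of `(B i)` to transversals of `(A i)` without increasing any `‖zᵢ - zⱼ‖`. Conversely, a point
`y ∈ A i` within distance `1` of `π a` lifts, with the last coordinate of `a` appended, to a
point of `B i` within distance `1` of `a`.
-/

/-- Projection of `ℝ^{d+1}` (with the Euclidean norm) onto the first `d` coordinates. -/
noncomputable def projFirst (d : ℕ) (v : EuclideanSpace ℝ (Fin (d + 1))) :
    EuclideanSpace ℝ (Fin d) :=
  WithLp.toLp 2 (fun i : Fin d => v i.castSucc)

noncomputable def euclideanSnoc {d : ℕ} (y : EuclideanSpace ℝ (Fin d)) (t : ℝ) :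
    EuclideanSpace ℝ (Fin (d + 1)) :=
  WithLp.toLp 2 (Fin.snoc (α := fun _ => ℝ) (WithLp.ofLp y) t)

section projFirst

variable {d : ℕ}

lemma projFirst_zero : projFirst d 0 = 0 := rfl

lemma projFirst_sub (x y : EuclideanSpace ℝ (Fin (d + 1))) :
    projFirst d (x - y) = projFirst d x - projFirst d y := rfl

lemma projFirst_euclideanSnoc (y : EuclideanSpace ℝ (Fin d)) (t : ℝ) :
    projFirst d (euclideanSnoc y t) = y := by
  ext i
  simp [projFirst, euclideanSnoc]

lemma euclideanSnoc_last (y : EuclideanSpace ℝ (Fin d)) (t : ℝ) :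
    euclideanSnoc y t (Fin.last d) = t := by
  simp [euclideanSnoc]

lemma continuous_projFirst : Continuous (projFirst d) :=
  (PiLp.continuous_toLp 2 _).comp <| continuous_pi fun i =>
    (EuclideanSpace.proj (𝕜 := ℝ) (Fin.castSucc i)).continuous

lemma norm_sq_eq_norm_projFirst_sq_add (v : EuclideanSpace ℝ (Fin (d + 1))) :
    ‖v‖ ^ 2 = ‖projFirst d v‖ ^ 2 + ‖v (Fin.last d)‖ ^ 2 := by
  simp only [EuclideanSpace.norm_sq_eq, Fin.sum_univ_castSucc]
  rfl

lemma norm_projFirst_le (v : EuclideanSpace ℝ (Fin (d + 1))) : ‖projFirst d v‖ ≤ ‖v‖ := by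
  refine le_of_sq_le_sq ?_ (norm_nonneg v)
  rw [norm_sq_eq_norm_projFirst_sq_add v]
  exact le_add_of_nonneg_right (sq_nonneg _)

lemma norm_eq_norm_projFirst_of_last_eq_zero {v : EuclideanSpace ℝ (Fin (d + 1))}
    (h : v (Fin.last d) = 0) : ‖v‖ = ‖projFirst d v‖ := by
  have hsq := norm_sq_eq_norm_projFirst_sq_add v
  rw [h, norm_zero, zero_pow two_ne_zero, add_zero] at hsq
  exact (sq_eq_sq₀ (norm_nonneg _) (norm_nonneg _)).mp hsq

lemma norm_projFirst_sub_sub_le (u v w x : EuclideanSpace ℝ (Fin (d + 1))) :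
    ‖(projFirst d u - projFirst d v) - (projFirst d w - projFirst d x)‖ ≤
      ‖(u - v) - (w - x)‖ := by
  rw [← projFirst_sub, ← projFirst_sub, ← projFirst_sub]
  exact norm_projFirst_le _

lemma exists_mem_preimage_projFirst_norm_sub_le {S : Set (EuclideanSpace ℝ (Fin d))} {r : ℝ}
    (a : EuclideanSpace ℝ (Fin (d + 1))) (h : ∃ y ∈ S, ‖y - projFirst d a‖ ≤ r) :
    ∃ w ∈ projFirst d ⁻¹' S, ‖w - a‖ ≤ r := by
  obtain ⟨y, hyS, hya⟩ := h
  refine ⟨euclideanSnoc y (a (Fin.last d)), by simpa [projFirst_euclideanSnoc] using hyS, ?_⟩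
  have hlast : (euclideanSnoc y (a (Fin.last d)) - a) (Fin.last d) = 0 := by
    simp [euclideanSnoc_last]
  rwa [norm_eq_norm_projFirst_of_last_eq_zero hlast, projFirst_sub, projFirst_euclideanSnoc]

end projFirst

theorem gridlike_lift_general (d n : ℕ)
    (A : ℕ → Set (EuclideanSpace ℝ (Fin d))) (s : EuclideanSpace ℝ (Fin d))
    (hAclosed : ∀ i, i ≤ n → IsClosed (A i))
    (hA0 : A 0 = {0}) (hAn : A n = {s})
    (hAdense : ∀ i, 1 ≤ i → i < n → ∀ a : EuclideanSpace ℝ (Fin d),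
      ∃ y ∈ A i, ‖y - a‖ ≤ 1)
    (B : ℕ → Set (EuclideanSpace ℝ (Fin (d + 1))))
    (hB0 : B 0 = {0}) (hBn : B n = {(WithLp.toLp 2 (Fin.snoc (α := fun _ => ℝ) (WithLp.ofLp s) 0) : EuclideanSpace ℝ (Fin (d + 1)))})
    (hBi : ∀ i, 1 ≤ i → i < n → B i = {v | projFirst d v ∈ A i}) :
    -- `B 0, …, B n` is a grid-like sequence in `ℝ^{d+1}`:
    ((∀ i, i ≤ n → IsClosed (B i)) ∧
      (∀ i, 1 ≤ i → i < n → ∀ a : EuclideanSpace ℝ (Fin (d + 1)),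
        ∃ y ∈ B i, ‖y - a‖ ≤ 1)) ∧
    -- projection of any transversal of `(B i)` is a transversal of `(A i)`
    -- with at most the same diameter:
    ∀ b : ℕ → EuclideanSpace ℝ (Fin (d + 1)), (∀ i, i ≤ n → b i ∈ B i) →
      (∀ i, i ≤ n → projFirst d (b i) ∈ A i) ∧
      ∀ C : ℝ,
        (∀ i j, 1 ≤ i → i ≤ n → 1 ≤ j → j ≤ n →
          ‖(b i - b (i - 1)) - (b j - b (j - 1))‖ ≤ C) →
        (∀ i j, 1 ≤ i → i ≤ n → 1 ≤ j → j ≤ n →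
          ‖(projFirst d (b i) - projFirst d (b (i - 1))) -
            (projFirst d (b j) - projFirst d (b (j - 1)))‖ ≤ C) := by
  have hBn' : B n = {euclideanSnoc s 0} := hBn
  refine ⟨⟨fun i hi => ?_, fun i h1 h2 a => ?_⟩, fun b hb => ⟨fun i hi => ?_, ?_⟩⟩
  · obtain rfl | rfl | ⟨h1, h2⟩ : i = 0 ∨ i = n ∨ (1 ≤ i ∧ i < n) := by omega
    · exact hB0 ▸ isClosed_singleton
    · exact hBn ▸ isClosed_singleton
    · exact hBi i h1 h2 ▸ (hAclosed i hi).preimage continuous_projFirst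
  · rw [hBi i h1 h2]
    exact exists_mem_preimage_projFirst_norm_sub_le a (hAdense i h1 h2 _)
  · have hbi := hb i hi
    obtain rfl | rfl | ⟨h1, h2⟩ : i = 0 ∨ i = n ∨ (1 ≤ i ∧ i < n) := by omega
    · rw [hB0, Set.mem_singleton_iff] at hbi
      rw [hbi, hA0, projFirst_zero]
      rfl
    · rw [hBn', Set.mem_singleton_iff] at hbi
      rw [hbi, hAn, projFirst_euclideanSnoc]
      rfl
    · rwa [hBi i h1 h2] at hbi
  · exact fun C hC i j h1i h2i h1j h2j =>
      (norm_projFirst_sub_sub_le _ _ _ _).trans (hC i j h1i h2i h1j h2j)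

/-- **Proposition 1**: `D*_{d+1} ≥ D*_d`. If `A 0, …, A n` is a grid-like sequence in
`ℝ^d`, then `B 0 = {0}`, `B i = A i × ℝ` `(1 ≤ i ≤ n−1)`, `B n = {(s,0)}` is a grid-like
sequence in `ℝ^{d+1}`, and for every transversal `b` of `(B i)` the projections
`a i = π (b i)` form a transversal of `(A i)` with `D((a i)) ≤ D((b i))`. -/
theorem gridlike_lift (d n : ℕ) (hn : 1 ≤ n)
    (A : ℕ → Set (EuclideanSpace ℝ (Fin d))) (s : EuclideanSpace ℝ (Fin d))
    (hAclosed : ∀ i, i ≤ n → IsClosed (A i))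
    (hA0 : A 0 = {0}) (hAn : A n = {s})
    (hAdense : ∀ i, 1 ≤ i → i < n → ∀ a : EuclideanSpace ℝ (Fin d),
      ∃ y ∈ A i, ‖y - a‖ ≤ 1)
    (B : ℕ → Set (EuclideanSpace ℝ (Fin (d + 1))))
    (hB0 : B 0 = {0}) (hBn : B n = {(WithLp.toLp 2 (Fin.snoc (α := fun _ => ℝ) (WithLp.ofLp s) 0) : EuclideanSpace ℝ (Fin (d + 1)))})
    (hBi : ∀ i, 1 ≤ i → i < n → B i = {v | projFirst d v ∈ A i}) :
    -- `B 0, …, B n` is a grid-like sequence in `ℝ^{d+1}`: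
    ((∀ i, i ≤ n → IsClosed (B i)) ∧
      (∀ i, 1 ≤ i → i < n → ∀ a : EuclideanSpace ℝ (Fin (d + 1)),
        ∃ y ∈ B i, ‖y - a‖ ≤ 1)) ∧
    -- projection of any transversal of `(B i)` is a transversal of `(A i)`
    -- with at most the same diameter:
    ∀ b : ℕ → EuclideanSpace ℝ (Fin (d + 1)), (∀ i, i ≤ n → b i ∈ B i) →
      (∀ i, i ≤ n → projFirst d (b i) ∈ A i) ∧
      ∀ C : ℝ,
        (∀ i j, 1 ≤ i → i ≤ n → 1 ≤ j → j ≤ n →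
          ‖(b i - b (i - 1)) - (b j - b (j - 1))‖ ≤ C) →
        (∀ i j, 1 ≤ i → i ≤ n → 1 ≤ j → j ≤ n →
          ‖(projFirst d (b i) - projFirst d (b (i - 1))) -
            (projFirst d (b j) - projFirst d (b (j - 1)))‖ ≤ C) :=
  gridlike_lift_general d n A s hAclosed hA0 hAn hAdense B hB0 hBn hBi
end

section
/- Let E be a real normed vector space and let A_0, A_1, …, A_n ⊆ E be closed sets with A_0 = {0}, A_n = {s} for some s ∈ E, and (a + B) ∩ A_i ≠ ∅ for every i ∈ {1, …, n−1} and every a ∈ E, where B is the closed unit ball of E. Then there exists a transversal a_0 ∈ A_0, …, a_n ∈ A_n such that, with z_i = a_i − a_{i-1}, one has ‖z_i − z_j‖ ≤ 4 for all i, j ∈ {1, …, n}. -/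
/-!
Follow the segment from `0` to `s` in `n` equal steps: pick `a i ∈ A i` within distance `1` of
`(i / n) • s`. Then every step `z i = a i - a (i - 1)` lies within `2` of `s / n`, so any two
steps are within `4` of each other.
-/

section

variable {E : Type*} [NormedAddCommGroup E] [NormedSpace ℝ E]

theorem norm_step_sub_le_of_near_line {f : ℕ → E} {v : E} {r : ℝ} {k : ℕ}
    (hk : ‖f (k + 1) - ((k + 1 : ℕ) : ℝ) • v‖ ≤ r) (hk' : ‖f k - (k : ℝ) • v‖ ≤ r) :
    ‖(f (k + 1) - f k) - v‖ ≤ 2 * r := by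
  have hsplit : (f (k + 1) - f k) - v
      = (f (k + 1) - ((k + 1 : ℕ) : ℝ) • v) - (f k - (k : ℝ) • v) := by
    push_cast
    rw [add_smul, one_smul]
    abel
  rw [hsplit]
  linarith [norm_sub_le (f (k + 1) - ((k + 1 : ℕ) : ℝ) • v) (f k - (k : ℝ) • v)]

theorem norm_step_sub_step_le_of_near_line {f : ℕ → E} {v : E} {r : ℝ} {n : ℕ}
    (hf : ∀ i ≤ n, ‖f i - (i : ℝ) • v‖ ≤ r) {i j : ℕ} (hi : 1 ≤ i) (hin : i ≤ n)
    (hj : 1 ≤ j) (hjn : j ≤ n) :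
    ‖(f i - f (i - 1)) - (f j - f (j - 1))‖ ≤ 4 * r := by
  obtain ⟨k, rfl⟩ := Nat.exists_eq_add_of_le' hi
  obtain ⟨l, rfl⟩ := Nat.exists_eq_add_of_le' hj
  simp only [Nat.add_sub_cancel]
  have hk := norm_step_sub_le_of_near_line (hf (k + 1) hin) (hf k (by omega))
  have hl := norm_step_sub_le_of_near_line (hf (l + 1) hjn) (hf l (by omega))
  calc ‖(f (k + 1) - f k) - (f (l + 1) - f l)‖
      ≤ ‖(f (k + 1) - f k) - v‖ + ‖(f (l + 1) - f l) - v‖ := by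
        simpa only [dist_eq_norm] using dist_triangle_right _ _ v
    _ ≤ 4 * r := by linarith

theorem exists_mem_near_line {A : ℕ → Set E} {n : ℕ} {s : E} {r : ℝ} (hr : 0 ≤ r)
    (h0 : (0 : E) ∈ A 0) (hs : s ∈ A n)
    (hdense : ∀ i, 1 ≤ i → i < n → ∀ a : E, ∃ y ∈ A i, ‖y - a‖ ≤ r) :
    ∀ i ≤ n, ∃ y ∈ A i, ‖y - (i : ℝ) • (n : ℝ)⁻¹ • s‖ ≤ r := by
  intro i hin
  rcases Nat.eq_zero_or_pos i with rfl | hi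
  · exact ⟨0, h0, by simpa using hr⟩
  rcases hin.eq_or_lt with rfl | hin
  · refine ⟨s, hs, ?_⟩
    rw [smul_smul, mul_inv_cancel₀ (by positivity), one_smul, sub_self, norm_zero]
    exact hr
  · exact hdense i hi hin _

end

theorem transversal_diam_le_four_general (E : Type*) [NormedAddCommGroup E] [NormedSpace ℝ E]
    (n : ℕ) (A : ℕ → Set E) (s : E)
    (hA0 : A 0 = {0}) (hAn : A n = {s})
    (hdense : ∀ i, 1 ≤ i → i < n → ∀ a : E, ∃ y ∈ A i, ‖y - a‖ ≤ 1) :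
    ∃ a : ℕ → E, (∀ i, i ≤ n → a i ∈ A i) ∧
      ∀ i j, 1 ≤ i → i ≤ n → 1 ≤ j → j ≤ n →
        ‖(a i - a (i - 1)) - (a j - a (j - 1))‖ ≤ 4 := by
  have h0 : (0 : E) ∈ A 0 := hA0 ▸ Set.mem_singleton 0
  have hs : s ∈ A n := hAn ▸ Set.mem_singleton s
  choose! a ha hnear using exists_mem_near_line zero_le_one h0 hs hdense
  refine ⟨a, ha, fun i j hi hin hj hjn => ?_⟩
  simpa only [mul_one] using norm_step_sub_step_le_of_near_line hnear hi hin hj hjn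

/-- **Proposition 2**: `D*_d ≤ 4`. For every grid-like sequence of closed sets
`A 0, …, A n` in a real normed vector space `E` (i.e. `A 0 = {0}`, `A n = {s}`, and
every translate `a + B` of the closed unit ball meets `A i` for `1 ≤ i ≤ n−1`),
there is a transversal `a i ∈ A i` whose differences `z i = a i − a (i−1)` satisfy
`‖z i − z j‖ ≤ 4` for all `i, j ∈ {1,…,n}`. -/
theorem transversal_diam_le_four (E : Type*) [NormedAddCommGroup E] [NormedSpace ℝ E]
    (n : ℕ) (hn : 1 ≤ n) (A : ℕ → Set E) (s : E)
    (hclosed : ∀ i, i ≤ n → IsClosed (A i))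
    (hA0 : A 0 = {0}) (hAn : A n = {s})
    (hdense : ∀ i, 1 ≤ i → i < n → ∀ a : E, ∃ y ∈ A i, ‖y - a‖ ≤ 1) :
    ∃ a : ℕ → E, (∀ i, i ≤ n → a i ∈ A i) ∧
      ∀ i j, 1 ≤ i → i ≤ n → 1 ≤ j → j ≤ n →
        ‖(a i - a (i - 1)) - (a j - a (j - 1))‖ ≤ 4 :=
  transversal_diam_le_four_general E n A s hA0 hAn hdense
end

section
/- Let n ≥ 1 and let A_1, …, A_{n−1} ⊆ ℝ be closed sets with A_i ∩ [a, a+1] ≠ ∅ for every a ∈ ℝ, and define the functions L_h, R_h : ℝ → ℝ by the recursion L_1(x) = x, R_1(x) = x + 1, L_{i+1}(x) = x + min{a ∈ A_i : a ≥ L_i(x)}, R_{i+1}(x) = x + 1 + max{a ∈ A_i : a ≤ R_i(x)} for 1 ≤ i ≤ n−1. Then for every h ∈ {1, …, n} and every p ∈ ℝ there exists x ∈ ℝ with L_h(x) ≤ p ≤ R_h(x); that is, the intervals J_h(x) = [L_h(x), R_h(x)] over all x ∈ ℝ cover ℝ. -/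
/-!
`L_h` is lower and `R_h` upper semicontinuous, `L_h ≤ R_h`, and `L_h → -∞` at `-∞`,
`R_h → +∞` at `+∞`. Hence `{x | L_h x ≤ p}` and `{x | p ≤ R_h x}` are closed, nonempty and
cover `ℝ`, so by connectedness of `ℝ` they meet.

Semicontinuity is inherited through the recursion because `c ↦ min {a ∈ B : a ≥ c}` is
monotone and lower semicontinuous for closed `B`, and composing a monotone lower
semicontinuous function with a lower semicontinuous one stays lower semicontinuous.
-/

/-- The left endpoints `L_h(x)` of the intervals `J_h(x)`:
`L 1 x = x` and `L (i+1) x = x + min {a ∈ A i : a ≥ L i x}`. -/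
noncomputable def Lfun (A : ℕ → Set ℝ) : ℕ → ℝ → ℝ
  | 0, x => x
  | 1, x => x
  | (i + 2), x => x + sInf {a : ℝ | a ∈ A (i + 1) ∧ Lfun A (i + 1) x ≤ a}

/-- The right endpoints `R_h(x)` of the intervals `J_h(x)`:
`R 1 x = x + 1` and `R (i+1) x = x + 1 + max {a ∈ A i : a ≤ R i x}`. -/
noncomputable def Rfun (A : ℕ → Set ℝ) : ℕ → ℝ → ℝ
  | 0, x => x + 1
  | 1, x => x + 1
  | (i + 2), x => x + 1 + sSup {a : ℝ | a ∈ A (i + 1) ∧ a ≤ Rfun A (i + 1) x}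

open Set Filter

theorem LowerSemicontinuous.comp_of_monotone {X γ δ : Type*} [TopologicalSpace X]
    [LinearOrder γ] [TopologicalSpace γ] [OrderTopology γ] [NoMinOrder γ] [Preorder δ]
    {g : γ → δ} {f : X → γ} (hg : LowerSemicontinuous g) (hg_mono : Monotone g)
    (hf : LowerSemicontinuous f) : LowerSemicontinuous (g ∘ f) := by
  intro x y hy
  obtain ⟨l, hl, hIoc⟩ := exists_Ioc_subset_of_mem_nhds (hg (f x) y hy) (exists_lt (f x))
  filter_upwards [hf x l hl] with x' hx'
  exact (hIoc ⟨lt_min hx' hl, min_le_right _ _⟩ : y < g (min (f x') (f x))).trans_le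
    (hg_mono (min_le_left _ _))

theorem UpperSemicontinuous.comp_of_monotone {X γ δ : Type*} [TopologicalSpace X]
    [LinearOrder γ] [TopologicalSpace γ] [OrderTopology γ] [NoMaxOrder γ] [Preorder δ]
    {g : γ → δ} {f : X → γ} (hg : UpperSemicontinuous g) (hg_mono : Monotone g)
    (hf : UpperSemicontinuous f) : UpperSemicontinuous (g ∘ f) :=
  LowerSemicontinuous.comp_of_monotone (γ := γᵒᵈ) (δ := δᵒᵈ) hg hg_mono.dual hf

theorem exists_le_and_le_of_semicontinuous {X δ : Type*} [TopologicalSpace X]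
    [PreconnectedSpace X] [LinearOrder δ] {f g : X → δ} (hf : LowerSemicontinuous f)
    (hg : UpperSemicontinuous g) (hfg : ∀ x, f x ≤ g x) {p : δ} {x₁ x₂ : X} (hx₁ : f x₁ ≤ p)
    (hx₂ : p ≤ g x₂) : ∃ x, f x ≤ p ∧ p ≤ g x := by
  have hcover : univ ⊆ f ⁻¹' Iic p ∪ g ⁻¹' Ici p := fun x _ =>
    (le_total p (g x)).elim Or.inr fun hgp => Or.inl ((hfg x).trans hgp)
  obtain ⟨x, -, hfx, hgx⟩ := isPreconnected_closed_iff.1 isPreconnected_univ _ _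
    (hf.isClosed_preimage p) (hg.isClosed_preimage p) hcover ⟨x₁, trivial, hx₁⟩
    ⟨x₂, trivial, hx₂⟩
  exact ⟨x, hfx, hgx⟩

section LeastAbove

variable {α : Type*} [ConditionallyCompleteLinearOrder α] {B : Set α} {a c : α}

noncomputable def leastAbove (B : Set α) (c : α) : α := sInf {a | a ∈ B ∧ c ≤ a}

-- Definitionally `leastAbove` in `αᵒᵈ`, which gives all its properties below for free.
noncomputable def greatestBelow (B : Set α) (c : α) : α := sSup {a | a ∈ B ∧ a ≤ c}

theorem leastAbove_le (ha : a ∈ B) (hca : c ≤ a) : leastAbove B c ≤ a :=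
  csInf_le ⟨c, fun _ h => h.2⟩ ⟨ha, hca⟩

theorem le_leastAbove (hB : ∀ c, ∃ a ∈ B, c ≤ a) (c : α) : c ≤ leastAbove B c :=
  le_csInf (hB c) fun _ h => h.2

theorem leastAbove_mono (hB : ∀ c, ∃ a ∈ B, c ≤ a) : Monotone (leastAbove B) :=
  fun _ c' h => csInf_le_csInf ⟨_, fun _ h => h.2⟩ (hB c') fun _ ha => ⟨ha.1, h.trans ha.2⟩

theorem lowerSemicontinuous_leastAbove [TopologicalSpace α] [OrderTopology α] [NoMinOrder α]
    (hBc : IsClosed B) (hB : ∀ c, ∃ a ∈ B, c ≤ a) : LowerSemicontinuous (leastAbove B) := by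
  intro c y hy
  by_cases hc : c ∈ B
  · have hyc : y < c := hy.trans_le (leastAbove_le hc le_rfl)
    filter_upwards [Ioi_mem_nhds hyc] with z hz
    exact hz.trans_le (le_leastAbove hB z)
  · -- `B` misses some `(l, c]`, so for `z > l` every `a ∈ B` with `z ≤ a` has `c ≤ a`
    obtain ⟨l, hl, hIoc⟩ := exists_Ioc_subset_of_mem_nhds (hBc.isOpen_compl.mem_nhds hc)
      (exists_lt c)
    filter_upwards [Ioi_mem_nhds hl] with z hz
    refine hy.trans_le (csInf_le_csInf ⟨c, fun _ h => h.2⟩ (hB z) fun a ha => ⟨ha.1, ?_⟩)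
    by_contra! hac
    exact hIoc ⟨hz.trans_le ha.2, hac.le⟩ ha.1

theorem le_greatestBelow (ha : a ∈ B) (hac : a ≤ c) : a ≤ greatestBelow B c :=
  leastAbove_le (α := αᵒᵈ) ha hac

theorem greatestBelow_mono (hB : ∀ c, ∃ a ∈ B, a ≤ c) : Monotone (greatestBelow B) :=
  (leastAbove_mono (α := αᵒᵈ) hB).dual

theorem upperSemicontinuous_greatestBelow [TopologicalSpace α] [OrderTopology α] [NoMaxOrder α]
    (hBc : IsClosed B) (hB : ∀ c, ∃ a ∈ B, a ≤ c) : UpperSemicontinuous (greatestBelow B) :=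
  lowerSemicontinuous_leastAbove (α := αᵒᵈ) hBc hB

end LeastAbove

theorem Lfun_add_two (A : ℕ → Set ℝ) (i : ℕ) :
    Lfun A (i + 2) = fun x => x + leastAbove (A (i + 1)) (Lfun A (i + 1) x) := rfl

theorem Rfun_add_two (A : ℕ → Set ℝ) (i : ℕ) :
    Rfun A (i + 2) = fun x => x + 1 + greatestBelow (A (i + 1)) (Rfun A (i + 1) x) := rfl

section Endpoints

variable {A : ℕ → Set ℝ} {h : ℕ}

theorem lowerSemicontinuous_Lfun (hclosed : ∀ i, 1 ≤ i → i < h → IsClosed (A i))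
    (hunbdd : ∀ i, 1 ≤ i → i < h → ∀ c, ∃ a ∈ A i, c ≤ a) :
    LowerSemicontinuous (Lfun A h) := by
  induction h using Nat.twoStepInduction with
  | zero | one => exact continuous_id.lowerSemicontinuous
  | more i _ ih =>
    have hL := ih (fun j hj hji => hclosed j hj (by omega)) fun j hj hji => hunbdd j hj (by omega)
    have hm := lowerSemicontinuous_leastAbove (hclosed (i + 1) (by omega) (by omega))
      (hunbdd (i + 1) (by omega) (by omega))
    rw [Lfun_add_two]
    exact continuous_id.lowerSemicontinuous.add
      (hm.comp_of_monotone (leastAbove_mono (hunbdd (i + 1) (by omega) (by omega))) hL)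

theorem upperSemicontinuous_Rfun (hclosed : ∀ i, 1 ≤ i → i < h → IsClosed (A i))
    (hunbdd : ∀ i, 1 ≤ i → i < h → ∀ c, ∃ a ∈ A i, a ≤ c) :
    UpperSemicontinuous (Rfun A h) := by
  induction h using Nat.twoStepInduction with
  | zero | one => exact (continuous_add_const 1).upperSemicontinuous
  | more i _ ih =>
    have hR := ih (fun j hj hji => hclosed j hj (by omega)) fun j hj hji => hunbdd j hj (by omega)
    have hM := upperSemicontinuous_greatestBelow (hclosed (i + 1) (by omega) (by omega))
      (hunbdd (i + 1) (by omega) (by omega))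
    rw [Rfun_add_two]
    exact (continuous_add_const 1).upperSemicontinuous.add
      (hM.comp_of_monotone (greatestBelow_mono (hunbdd (i + 1) (by omega) (by omega))) hR)

theorem Lfun_add_one_le_Rfun
    (hdense : ∀ i, 1 ≤ i → i < h → ∀ a : ℝ, (A i ∩ Icc a (a + 1)).Nonempty) (x : ℝ) :
    Lfun A h x + 1 ≤ Rfun A h x := by
  induction h using Nat.twoStepInduction with
  | zero | one => exact le_rfl
  | more i _ ih =>
    have hgap := ih fun j hj hji => hdense j hj (by omega)
    obtain ⟨a, ha, hLa, haL⟩ := hdense (i + 1) (by omega) (by omega) (Lfun A (i + 1) x)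
    have hm := leastAbove_le ha hLa
    have hM := le_greatestBelow ha (haL.trans hgap)
    simp only [Lfun_add_two, Rfun_add_two]
    linarith

theorem tendsto_Lfun_atBot
    (hdense : ∀ i, 1 ≤ i → i < h → ∀ a : ℝ, (A i ∩ Icc a (a + 1)).Nonempty) :
    Tendsto (Lfun A h) atBot atBot := by
  induction h using Nat.twoStepInduction with
  | zero | one => exact tendsto_id
  | more i _ ih =>
    refine tendsto_atBot_mono (fun x => ?_) (tendsto_atBot_add_const_right _ 1
      (tendsto_id.atBot_add_atBot (ih fun j hj hji => hdense j hj (by omega))))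
    obtain ⟨a, ha, hLa, haL⟩ := hdense (i + 1) (by omega) (by omega) (Lfun A (i + 1) x)
    have hm := leastAbove_le ha hLa
    simp only [Lfun_add_two, id]
    linarith

theorem tendsto_Rfun_atTop
    (hdense : ∀ i, 1 ≤ i → i < h → ∀ a : ℝ, (A i ∩ Icc a (a + 1)).Nonempty) :
    Tendsto (Rfun A h) atTop atTop := by
  induction h using Nat.twoStepInduction with
  | zero | one => exact tendsto_atTop_add_const_right _ 1 tendsto_id
  | more i _ ih =>
    refine tendsto_atTop_mono (fun x => ?_)
      (tendsto_id.atTop_add_atTop (ih fun j hj hji => hdense j hj (by omega)))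
    obtain ⟨a, ha, hRa, haR⟩ := hdense (i + 1) (by omega) (by omega) (Rfun A (i + 1) x - 1)
    have hM := le_greatestBelow ha (by linarith : a ≤ Rfun A (i + 1) x)
    simp only [Rfun_add_two, id]
    linarith

end Endpoints

theorem intervals_cover_general (n : ℕ) (A : ℕ → Set ℝ)
    (hclosed : ∀ i, 1 ≤ i → i < n → IsClosed (A i))
    (hdense : ∀ i, 1 ≤ i → i < n → ∀ a : ℝ, (A i ∩ Set.Icc a (a + 1)).Nonempty) :
    ∀ h, 1 ≤ h → h ≤ n → ∀ p : ℝ, ∃ x : ℝ, Lfun A h x ≤ p ∧ p ≤ Rfun A h x := by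
  intro h _ hhn p
  have hclosed' : ∀ i, 1 ≤ i → i < h → IsClosed (A i) := fun i hi hih =>
    hclosed i hi (hih.trans_le hhn)
  have hdense' : ∀ i, 1 ≤ i → i < h → ∀ a : ℝ, (A i ∩ Icc a (a + 1)).Nonempty :=
    fun i hi hih => hdense i hi (hih.trans_le hhn)
  have hunbdd_above : ∀ i, 1 ≤ i → i < h → ∀ c, ∃ a ∈ A i, c ≤ a := fun i hi hih c =>
    let ⟨a, ha, hca, _⟩ := hdense' i hi hih c
    ⟨a, ha, hca⟩
  have hunbdd_below : ∀ i, 1 ≤ i → i < h → ∀ c, ∃ a ∈ A i, a ≤ c := fun i hi hih c =>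
    let ⟨a, ha, _, hac⟩ := hdense' i hi hih (c - 1)
    ⟨a, ha, by linarith⟩
  obtain ⟨x₁, hx₁⟩ := ((tendsto_Lfun_atBot hdense').eventually (eventually_le_atBot p)).exists
  obtain ⟨x₂, hx₂⟩ := ((tendsto_Rfun_atTop hdense').eventually (eventually_ge_atTop p)).exists
  exact exists_le_and_le_of_semicontinuous (lowerSemicontinuous_Lfun hclosed' hunbdd_above)
    (upperSemicontinuous_Rfun hclosed' hunbdd_below)
    (fun x => by linarith [Lfun_add_one_le_Rfun hdense' x]) hx₁ hx₂

/-- **Lemma (covering)**: for every `h ∈ {1,…,n}` the intervals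
`J_h(x) = [L_h(x), R_h(x)]`, `x ∈ ℝ`, cover all of `ℝ`. -/
theorem intervals_cover (n : ℕ) (hn : 1 ≤ n) (A : ℕ → Set ℝ)
    (hclosed : ∀ i, 1 ≤ i → i < n → IsClosed (A i))
    (hdense : ∀ i, 1 ≤ i → i < n → ∀ a : ℝ, (A i ∩ Set.Icc a (a + 1)).Nonempty) :
    ∀ h, 1 ≤ h → h ≤ n → ∀ p : ℝ, ∃ x : ℝ, Lfun A h x ≤ p ∧ p ≤ Rfun A h x :=
  intervals_cover_general n A hclosed hdense
end
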